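/- Suppose classification vectors c and c' (of honest processes) both misclassify the faulty process p_i as honest (c[i] = c'[i] = 1), and in total k_A processes are misclassified by at least one honest process. Then the positions of i in π(c) and π(c') differ by at most k_A − 1. -/

import Mathlib

/-!
The position of a process `p` with `c p = true` in `π(c)` counts the indices `j ≤ p` with
`c j = true`, so two such positions differ by at most the number of indices on which the two
vectors disagree. Two honest vectors can only disagree on a process that one of them
misclassifies, and they agree on `p` itself, which is misclassified: hence at most `k_A - 1`
disagreements.
-/

/-- The (1-indexed) position of index `i` in the ordering `π(c)`. -/
def piPos {n : ℕ} (c : Fin n → Bool) (i : Fin n) : ℕ :=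
  if c i then (Finset.univ.filter (fun j => j ≤ i ∧ c j)).card
  else (i : ℕ) + 1 + (Finset.univ.filter (fun j => i < j ∧ c j)).card

open Finset

theorem card_filter_and_le_add_card_ne {ι : Type*} [Fintype ι] [DecidableEq ι] (P : ι → Prop)
    [DecidablePred P] (c c' : ι → Bool) :
    #{j | P j ∧ c j} ≤ #{j | P j ∧ c' j} + #{j | c j ≠ c' j} := by
  calc #{j | P j ∧ c j}
      ≤ #(({j | P j ∧ c j} : Finset ι) \ ({j | P j ∧ c' j} : Finset ι)) + #{j | P j ∧ c' j} :=
        card_le_card_sdiff_add_card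
    _ ≤ #{j | c j ≠ c' j} + #{j | P j ∧ c' j} := by
        gcongr
        intro j hj
        simp only [mem_sdiff, mem_filter, mem_univ, true_and] at hj ⊢
        grind
    _ = _ := add_comm _ _

theorem piPos_of_true {n : ℕ} {c : Fin n → Bool} {i : Fin n} (hc : c i = true) :
    piPos c i = #{j | j ≤ i ∧ c j} := by
  simp [piPos, hc]

theorem abs_piPos_sub_piPos_le {n : ℕ} {c c' : Fin n → Bool} {i : Fin n}
    (hc : c i = true) (hc' : c' i = true) :
    |(piPos c i : ℤ) - piPos c' i| ≤ #{j | c j ≠ c' j} := by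
  have h := card_filter_and_le_add_card_ne (· ≤ i) c c'
  have h' := card_filter_and_le_add_card_ne (· ≤ i) c' c
  simp only [ne_comm (a := c' _)] at h'
  rw [piPos_of_true hc, piPos_of_true hc', abs_sub_le_iff]
  omega

open Classical in
theorem misclassified_faulty_positions_close_general {n kA : ℕ}
    (H F : Finset (Fin n))
    (hdisj : Disjoint H F)
    (c : Fin n → Fin n → Bool)  -- classification vectors (those of honest processes matter)
    (hkA : (Finset.univ.filter (fun j : Fin n => ∃ i ∈ H, c i j ≠ decide (j ∈ H))).card = kA)
    (i₀ : Fin n) (hi₀ : i₀ ∈ H) (i₁ : Fin n) (hi₁ : i₁ ∈ H)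
    (p : Fin n) (hp : p ∈ F)
    (hc₀ : c i₀ p = true) (hc₁ : c i₁ p = true) :
    |(piPos (c i₀) p : ℤ) - (piPos (c i₁) p : ℤ)| ≤ (kA : ℤ) - 1 := by
  have hpH : p ∉ H := disjoint_right.mp hdisj hp
  have hdisagree : ({j | c i₀ j ≠ c i₁ j} : Finset (Fin n)) ⊂
      ({j | ∃ i ∈ H, c i j ≠ decide (j ∈ H)} : Finset (Fin n)) := by
    refine (ssubset_iff_of_subset fun j hj => ?_).mpr ⟨p, ?_, ?_⟩
    · simp only [mem_filter, mem_univ, true_and] at hj ⊢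
      by_cases hi₀j : c i₀ j = decide (j ∈ H)
      · exact ⟨i₁, hi₁, hi₀j ▸ Ne.symm hj⟩
      · exact ⟨i₀, hi₀, hi₀j⟩
    · simpa [hpH] using ⟨i₀, hi₀, hc₀⟩
    · simp [hc₀, hc₁]
  have hlt := hkA ▸ card_lt_card hdisagree
  have := abs_piPos_sub_piPos_le hc₀ hc₁
  omega

open Classical in
/-- If the classification vectors of two honest processes `i₀` and `i₁` both
misclassify the faulty process `p` as honest, and in total `kA` processes are misclassified by
at least one honest process, then the positions of `p` in the two orderings differ by at most
`kA − 1`. -/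
theorem misclassified_faulty_positions_close {n kA : ℕ}
    (H F : Finset (Fin n))
    (hpart : ∀ i, i ∈ H ∨ i ∈ F) (hdisj : Disjoint H F)
    (c : Fin n → Fin n → Bool)  -- classification vectors (those of honest processes matter)
    (hkA : (Finset.univ.filter (fun j : Fin n => ∃ i ∈ H, c i j ≠ decide (j ∈ H))).card = kA)
    (i₀ : Fin n) (hi₀ : i₀ ∈ H) (i₁ : Fin n) (hi₁ : i₁ ∈ H)
    (p : Fin n) (hp : p ∈ F)
    (hc₀ : c i₀ p = true) (hc₁ : c i₁ p = true) :
    |(piPos (c i₀) p : ℤ) - (piPos (c i₁) p : ℤ)| ≤ (kA : ℤ) - 1 :=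
  misclassified_faulty_positions_close_general H F hdisj c hkA i₀ hi₀ i₁ hi₁ p hp hc₀ hc₁
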